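/- Let $\gamma > 0$, $0 < \eta < \tfrac{1}{2}(1 - 2^{-\gamma})$, and let $\{b_k\}_{k\ge 0}$ be a bounded nonnegative sequence. If $\{x_k\}_{k\ge 0}$ is a bounded nonnegative sequence satisfying $x_k \le b_k + \eta \sum_{l=0}^{\infty} 2^{-\gamma |k-l|} x_l$ for all $k \ge 0$, then there exists $r = r(\eta) \in (2^{-\gamma}, 1)$ and a constant $C$ such that $x_k \le C \sum_{l=0}^{\infty} r^{|k-l|} b_l$ for all $k \ge 0$. -/

import Mathlib

/-!
Write `2 ^ (-γ) = s * r` with `2 ^ (-γ) < r < 1` and `2 * η < 1 - s`. Since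
`(s r) ^ |k - l| * r ^ |l - m| ≤ s ^ |k - l| * r ^ |k - m|`, convolving `y = ∑ₘ r ^ |· - m| b m`
with `(s r) ^ |·|` gives at most `2 / (1 - s) * y`, so `C y` with `C = (1 - 2η / (1 - s))⁻¹`
is a supersolution: `b + η (s r) ^ |·| ∗ (C y) ≤ C y`. The operator `η (s r) ^ |·| ∗` has row sums
at most `2η / (1 - s r) < 1`, and comparing at the supremum of `x - C y` shows that the bounded
subsolution `x` stays below the bounded supersolution `C y`.
-/

theorem Summable.mul_of_abs_le {ι : Type*} {f u : ι → ℝ} (hf : Summable f) {B : ℝ}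
    (hu : ∀ i, |u i| ≤ B) : Summable fun i => f i * u i :=
  (hf.abs.mul_right B).of_norm_bounded fun i => by
    rw [Real.norm_eq_abs, abs_mul]
    exact mul_le_mul_of_nonneg_left (hu i) (abs_nonneg _)

section Kernel

variable {ι : Type*} {K : ι → ι → ℝ} {q : ℝ}

theorem nonpos_of_le_tsum_kernel_mul (hK0 : ∀ k l, 0 ≤ K k l) (hKs : ∀ k, Summable (K k))
    (hKq : ∀ k, ∑' l, K k l ≤ q) (hq : q < 1) {z : ι → ℝ} (hz : BddAbove (Set.range z))
    (hKz : ∀ k, Summable fun l => K k l * z l) (hzK : ∀ k, z k ≤ ∑' l, K k l * z l) (k : ι) :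
    z k ≤ 0 := by
  by_contra! hzk
  have : Nonempty ι := ⟨k⟩
  set S := ⨆ i, z i
  have hzS : ∀ i, z i ≤ S := le_ciSup hz
  have hS : 0 < S := hzk.trans_le (hzS k)
  have : S ≤ q * S := ciSup_le fun i =>
    calc z i ≤ ∑' l, K i l * z l := hzK i
      _ ≤ ∑' l, K i l * S :=
        (hKz i).tsum_le_tsum (fun l => mul_le_mul_of_nonneg_left (hzS l) (hK0 i l))
          ((hKs i).mul_right S)
      _ = (∑' l, K i l) * S := tsum_mul_right
      _ ≤ q * S := mul_le_mul_of_nonneg_right (hKq i) hS.le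
  nlinarith

theorem le_of_le_add_tsum_kernel_mul (hK0 : ∀ k l, 0 ≤ K k l) (hKs : ∀ k, Summable (K k))
    (hKq : ∀ k, ∑' l, K k l ≤ q) (hq : q < 1) {b x w : ι → ℝ} {Bx Bw : ℝ}
    (hxB : ∀ k, |x k| ≤ Bx) (hwB : ∀ k, |w k| ≤ Bw)
    (hx : ∀ k, x k ≤ b k + ∑' l, K k l * x l) (hw : ∀ k, b k + ∑' l, K k l * w l ≤ w k)
    (k : ι) : x k ≤ w k := by
  have hKx k := (hKs k).mul_of_abs_le hxB
  have hKw k := (hKs k).mul_of_abs_le hwB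
  suffices x k - w k ≤ 0 by linarith
  refine nonpos_of_le_tsum_kernel_mul hK0 hKs hKq hq (z := x - w) ⟨Bx + Bw, ?_⟩
    (fun k => ?_) (fun k => ?_) k
  · rintro _ ⟨i, rfl⟩
    linarith [(abs_le.mp (hxB i)).2, (abs_le.mp (hwB i)).1, Pi.sub_apply x w i]
  · simpa only [Pi.sub_apply, mul_sub] using (hKx k).sub (hKw k)
  · simp only [Pi.sub_apply, mul_sub, (hKx k).tsum_sub (hKw k)]
    linarith [hx k, hw k]

end Kernel

namespace DiscreteGronwall

theorem mul_two_div_lt_one {η s : ℝ} (hs : s < 1) (h : 2 * η < 1 - s) :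
    η * (2 / (1 - s)) < 1 := by
  rw [mul_div_assoc', mul_comm, div_lt_one (by linarith)]
  exact h

theorem exists_mul_eq_of_two_mul_lt_one_sub {ρ η : ℝ} (hρ : 0 < ρ) (hη : 0 ≤ η)
    (hρη : 2 * η < 1 - ρ) :
    ∃ r s, ρ < r ∧ r < 1 ∧ 0 < s ∧ s * r = ρ ∧ 2 * η < 1 - s := by
  have hη1 : 0 < 1 - 2 * η := by linarith
  obtain ⟨r, hr, hr1⟩ := exists_between ((div_lt_one hη1).2 (by linarith) : ρ / (1 - 2 * η) < 1)
  have hρr : ρ < r := (le_div_self hρ.le hη1 (by linarith)).trans_lt hr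
  have hr0 : 0 < r := hρ.trans hρr
  refine ⟨r, ρ / r, hρr, hr1, by positivity, div_mul_cancel₀ _ hr0.ne', ?_⟩
  have hs : ρ / r < 1 - 2 * η := (div_lt_iff₀ hr0).2 (by linarith [(div_lt_iff₀ hη1).1 hr])
  linarith

noncomputable def geomKernel (c : ℝ) (k l : ℕ) : ℝ := c ^ |(k : ℝ) - l|

noncomputable def geomConv (c : ℝ) (u : ℕ → ℝ) (k : ℕ) : ℝ := ∑' l, geomKernel c k l * u l

section GeomKernel

variable {c : ℝ}

theorem geomKernel_nonneg (hc : 0 ≤ c) (k l : ℕ) : 0 ≤ geomKernel c k l :=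
  Real.rpow_nonneg hc _

@[simp]
theorem geomKernel_self (c : ℝ) (k : ℕ) : geomKernel c k k = 1 := by
  simp [geomKernel]

theorem hasSum_pow_natAbs (hc0 : 0 ≤ c) (hc1 : c < 1) :
    HasSum (fun n : ℤ => c ^ n.natAbs) ((1 - c)⁻¹ + c * (1 - c)⁻¹) :=
  HasSum.of_nat_of_neg_add_one (by simpa using hasSum_geometric_of_lt_one hc0 hc1)
    (by simpa only [Int.natAbs_neg, ← Nat.cast_succ, Int.natAbs_natCast, pow_succ'] using
      (hasSum_geometric_of_lt_one hc0 hc1).mul_left c)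

theorem geomKernel_eq_comp (c : ℝ) (k : ℕ) :
    geomKernel c k = (fun n : ℤ => c ^ n.natAbs) ∘ fun l : ℕ => (k : ℤ) - l := by
  ext l
  rw [geomKernel, Function.comp_apply, ← Real.rpow_natCast, Nat.cast_natAbs]
  push_cast
  rfl

theorem sub_natCast_injective (k : ℕ) : Function.Injective fun l : ℕ => (k : ℤ) - l :=
  fun _ _ h => by simpa using h

theorem summable_geomKernel (hc0 : 0 ≤ c) (hc1 : c < 1) (k : ℕ) : Summable (geomKernel c k) := by
  rw [geomKernel_eq_comp]
  exact (hasSum_pow_natAbs hc0 hc1).summable.comp_injective (sub_natCast_injective k)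

theorem tsum_geomKernel_le (hc0 : 0 ≤ c) (hc1 : c < 1) (k : ℕ) :
    ∑' l, geomKernel c k l ≤ 2 / (1 - c) := by
  have h := hasSum_pow_natAbs hc0 hc1
  calc ∑' l, geomKernel c k l ≤ ∑' n : ℤ, c ^ n.natAbs := by
        rw [geomKernel_eq_comp]
        exact tsum_comp_le_tsum_of_inj h.summable (fun _ => by positivity)
          (sub_natCast_injective k)
    _ = (1 - c)⁻¹ + c * (1 - c)⁻¹ := h.tsum_eq
    _ ≤ 2 / (1 - c) := by
        rw [← one_add_mul, ← div_eq_mul_inv]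
        gcongr
        linarith

theorem geomKernel_mul_mul_geomKernel_le {s r : ℝ} (hs : 0 ≤ s) (hr0 : 0 < r) (hr1 : r ≤ 1)
    (k l m : ℕ) :
    geomKernel (s * r) k l * geomKernel r l m ≤ geomKernel s k l * geomKernel r k m := by
  simp only [geomKernel]
  rw [Real.mul_rpow hs hr0.le, mul_assoc, ← Real.rpow_add hr0]
  exact mul_le_mul_of_nonneg_left
    (Real.rpow_le_rpow_of_exponent_ge hr0 hr1 (abs_sub_le _ _ _)) (by positivity)

theorem geomConv_nonneg (hc : 0 ≤ c) {u : ℕ → ℝ} (hu0 : ∀ l, 0 ≤ u l) (k : ℕ) :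
    0 ≤ geomConv c u k :=
  tsum_nonneg fun l => mul_nonneg (geomKernel_nonneg hc k l) (hu0 l)

theorem geomConv_const_mul (c a : ℝ) (u : ℕ → ℝ) (k : ℕ) :
    geomConv c (fun l => a * u l) k = a * geomConv c u k := by
  simp only [geomConv, ← tsum_mul_left, mul_left_comm]

section Bounded

variable {u : ℕ → ℝ} {B : ℝ}

theorem summable_geomKernel_mul (hc0 : 0 ≤ c) (hc1 : c < 1) (hu0 : ∀ l, 0 ≤ u l)
    (huB : ∀ l, u l ≤ B) (k : ℕ) : Summable fun l => geomKernel c k l * u l :=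
  (summable_geomKernel hc0 hc1 k).mul_of_abs_le fun l => (abs_of_nonneg (hu0 l)).trans_le (huB l)

theorem le_geomConv (hc0 : 0 ≤ c) (hc1 : c < 1) (hu0 : ∀ l, 0 ≤ u l) (huB : ∀ l, u l ≤ B)
    (k : ℕ) : u k ≤ geomConv c u k := by
  simpa [geomConv] using (summable_geomKernel_mul hc0 hc1 hu0 huB k).le_tsum k
    fun l _ => mul_nonneg (geomKernel_nonneg hc0 k l) (hu0 l)

theorem geomConv_le (hc0 : 0 ≤ c) (hc1 : c < 1) (hu0 : ∀ l, 0 ≤ u l) (huB : ∀ l, u l ≤ B)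
    (k : ℕ) : geomConv c u k ≤ 2 / (1 - c) * B :=
  calc geomConv c u k ≤ ∑' l, geomKernel c k l * B :=
        (summable_geomKernel_mul hc0 hc1 hu0 huB k).tsum_le_tsum
          (fun l => mul_le_mul_of_nonneg_left (huB l) (geomKernel_nonneg hc0 k l))
          ((summable_geomKernel hc0 hc1 k).mul_right B)
    _ = (∑' l, geomKernel c k l) * B := tsum_mul_right
    _ ≤ 2 / (1 - c) * B :=
        mul_le_mul_of_nonneg_right (tsum_geomKernel_le hc0 hc1 k) ((hu0 0).trans (huB 0))

end Bounded

section Convolution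

variable {s r : ℝ} {b : ℕ → ℝ} {B : ℝ}

theorem geomKernel_mul_geomConv_le (hs0 : 0 ≤ s) (hr0 : 0 < r) (hr1 : r < 1)
    (hb0 : ∀ l, 0 ≤ b l) (hbB : ∀ l, b l ≤ B) (k l : ℕ) :
    geomKernel (s * r) k l * geomConv r b l ≤ geomKernel s k l * geomConv r b k := by
  simp only [geomConv, ← tsum_mul_left]
  refine Summable.tsum_le_tsum (fun m => ?_)
    ((summable_geomKernel_mul hr0.le hr1 hb0 hbB l).mul_left _)
    ((summable_geomKernel_mul hr0.le hr1 hb0 hbB k).mul_left _)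
  rw [← mul_assoc, ← mul_assoc]
  exact mul_le_mul_of_nonneg_right (geomKernel_mul_mul_geomKernel_le hs0 hr0 hr1.le k l m) (hb0 m)

theorem geomConv_geomConv_le (hs0 : 0 ≤ s) (hs1 : s < 1) (hr0 : 0 < r) (hr1 : r < 1)
    (hb0 : ∀ l, 0 ≤ b l) (hbB : ∀ l, b l ≤ B) (k : ℕ) :
    geomConv (s * r) (geomConv r b) k ≤ 2 / (1 - s) * geomConv r b k := by
  have hsr0 : 0 ≤ s * r := by positivity
  have hsr1 : s * r < 1 := by nlinarith
  calc geomConv (s * r) (geomConv r b) k ≤ ∑' l, geomKernel s k l * geomConv r b k :=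
        (summable_geomKernel_mul hsr0 hsr1 (geomConv_nonneg hr0.le hb0)
          (geomConv_le hr0.le hr1 hb0 hbB) k).tsum_le_tsum
          (geomKernel_mul_geomConv_le hs0 hr0 hr1 hb0 hbB k)
          ((summable_geomKernel hs0 hs1 k).mul_right _)
    _ = (∑' l, geomKernel s k l) * geomConv r b k := tsum_mul_right
    _ ≤ 2 / (1 - s) * geomConv r b k :=
        mul_le_mul_of_nonneg_right (tsum_geomKernel_le hs0 hs1 k) (geomConv_nonneg hr0.le hb0 k)

theorem add_mul_geomConv_le {η : ℝ} (hη : 0 ≤ η) (hηs : 2 * η < 1 - s) (hs0 : 0 ≤ s)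
    (hs1 : s < 1) (hr0 : 0 < r) (hr1 : r < 1) (hb0 : ∀ l, 0 ≤ b l) (hbB : ∀ l, b l ≤ B)
    (k : ℕ) :
    b k + η * geomConv (s * r) (fun l => (1 - η * (2 / (1 - s)))⁻¹ * geomConv r b l) k ≤
      (1 - η * (2 / (1 - s)))⁻¹ * geomConv r b k := by
  set κ := η * (2 / (1 - s))
  have hκ : 0 < 1 - κ := sub_pos.mpr (mul_two_div_lt_one hs1 hηs)
  rw [geomConv_const_mul]
  calc b k + η * ((1 - κ)⁻¹ * geomConv (s * r) (geomConv r b) k)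
      ≤ geomConv r b k + η * ((1 - κ)⁻¹ * (2 / (1 - s) * geomConv r b k)) := by
        gcongr
        · exact le_geomConv hr0.le hr1 hb0 hbB k
        · exact geomConv_geomConv_le hs0 hs1 hr0 hr1 hb0 hbB k
    _ = (1 - κ)⁻¹ * geomConv r b k := by
        field_simp
        ring

theorem le_mul_geomConv_of_le_add_mul_geomConv {η : ℝ} (hη : 0 ≤ η) (hηs : 2 * η < 1 - s)
    (hs0 : 0 ≤ s) (hr0 : 0 < r) (hr1 : r < 1) (hb0 : ∀ l, 0 ≤ b l) (hbB : ∀ l, b l ≤ B)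
    {x : ℕ → ℝ} {M : ℝ} (hx0 : ∀ l, 0 ≤ x l) (hxM : ∀ l, x l ≤ M)
    (hx : ∀ k, x k ≤ b k + η * geomConv (s * r) x k) (k : ℕ) :
    x k ≤ (1 - η * (2 / (1 - s)))⁻¹ * geomConv r b k := by
  have hs1 : s < 1 := by linarith
  have hsr0 : 0 ≤ s * r := by positivity
  have hsr1 : s * r < 1 := by nlinarith
  have hyB (l : ℕ) : |geomConv r b l| ≤ 2 / (1 - r) * B :=
    (abs_of_nonneg (geomConv_nonneg hr0.le hb0 l)).trans_le (geomConv_le hr0.le hr1 hb0 hbB l)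
  refine le_of_le_add_tsum_kernel_mul (K := fun k l => η * geomKernel (s * r) k l) (b := b)
    (fun k l => mul_nonneg hη (geomKernel_nonneg hsr0 k l))
    (fun k => (summable_geomKernel hsr0 hsr1 k).mul_left η)
    (fun k => ?_) (mul_two_div_lt_one hsr1 (show 2 * η < 1 - s * r by nlinarith))
    (fun l => (abs_of_nonneg (hx0 l)).trans_le (hxM l))
    (fun l => (abs_mul _ _).trans_le (mul_le_mul_of_nonneg_left (hyB l) (abs_nonneg _)))
    (fun k => ?_) (fun k => ?_) k
  · rw [tsum_mul_left]
    exact mul_le_mul_of_nonneg_left (tsum_geomKernel_le hsr0 hsr1 k) hη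
  · simpa only [mul_assoc, tsum_mul_left, geomConv] using hx k
  · simp only [mul_assoc, tsum_mul_left]
    exact add_mul_geomConv_le hη hηs hs0 hs1 hr0 hr1 hb0 hbB k

end Convolution

end GeomKernel

theorem discrete_gronwall_general
    (γ η : ℝ) (hη₀ : 0 < η) (hη : η < (1 - (2 : ℝ) ^ (-γ)) / 2)
    (b x : ℕ → ℝ)
    (hb0 : ∀ k, 0 ≤ b k) (hbB : ∃ M, ∀ k, b k ≤ M)
    (hx0 : ∀ k, 0 ≤ x k) (hxB : ∃ M, ∀ k, x k ≤ M)
    (hrec : ∀ k, x k ≤ b k + η * ∑' l : ℕ, (2 : ℝ) ^ (-(γ * |(k : ℝ) - (l : ℝ)|)) * x l) :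
    ∃ r : ℝ, (2 : ℝ) ^ (-γ) < r ∧ r < 1 ∧
      ∃ C : ℝ, 0 < C ∧ ∀ k, x k ≤ C * ∑' l : ℕ, r ^ |(k : ℝ) - (l : ℝ)| * b l := by
  obtain ⟨Mb, hMb⟩ := hbB
  obtain ⟨Mx, hMx⟩ := hxB
  have hρ0 : 0 < (2 : ℝ) ^ (-γ) := by positivity
  obtain ⟨r, s, hρr, hr1, hs0, hsr, hηs⟩ :=
    exists_mul_eq_of_two_mul_lt_one_sub hρ0 hη₀.le (by linarith)
  refine ⟨r, hρr, hr1, _, inv_pos.mpr (sub_pos.mpr (mul_two_div_lt_one (by linarith) hηs)),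
    le_mul_geomConv_of_le_add_mul_geomConv hη₀.le hηs hs0.le (hρ0.trans hρr) hr1 hb0 hMb hx0 hMx
      fun k => ?_⟩
  have hkernel (l : ℕ) : (2 : ℝ) ^ (-(γ * |(k : ℝ) - l|)) = geomKernel (s * r) k l := by
    rw [hsr, geomKernel, ← Real.rpow_mul zero_le_two, neg_mul]
  simpa only [geomConv, hkernel] using hrec k

/-- **Discrete Gronwall inequality.**  Let `γ > 0`, `0 < η < (1 - 2⁻ᵞ)/2`, and let
`b` be a bounded nonnegative sequence.  If `x` is a bounded nonnegative sequence
satisfying `x k ≤ b k + η * ∑' l, 2^(-γ|k-l|) * x l` for all `k`, then there is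
`r = r(η) ∈ (2⁻ᵞ, 1)` and a constant `C` such that
`x k ≤ C * ∑' l, r^(|k-l|) * b l` for all `k`. -/
theorem discrete_gronwall
    (γ η : ℝ) (hγ : 0 < γ) (hη₀ : 0 < η) (hη : η < (1 - (2 : ℝ) ^ (-γ)) / 2)
    (b x : ℕ → ℝ)
    (hb0 : ∀ k, 0 ≤ b k) (hbB : ∃ M, ∀ k, b k ≤ M)
    (hx0 : ∀ k, 0 ≤ x k) (hxB : ∃ M, ∀ k, x k ≤ M)
    (hrec : ∀ k, x k ≤ b k + η * ∑' l : ℕ, (2 : ℝ) ^ (-(γ * |(k : ℝ) - (l : ℝ)|)) * x l) :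
    ∃ r : ℝ, (2 : ℝ) ^ (-γ) < r ∧ r < 1 ∧
      ∃ C : ℝ, 0 < C ∧ ∀ k, x k ≤ C * ∑' l : ℕ, r ^ |(k : ℝ) - (l : ℝ)| * b l :=
  discrete_gronwall_general γ η hη₀ hη b x hb0 hbB hx0 hxB hrec

end DiscreteGronwall
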